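/- For N ≥ 2, let Σ_N be the set of N equidistributed unit vectors in ℝ² (i.e. v_j = (cos(2πj/N), sin(2πj/N)), 0 ≤ j < N), and define T_N^* f(x,y) := sup_{v∈Σ_N} |p.v. ∫_ℝ f((x,y)+tv) dt/t|. Then there is an absolute constant c > 0 such that the operator norm of T_N^* on L²(ℝ²) is at least c log N. -/

import Mathlib

noncomputable section
open MeasureTheory Filter Metric Set
open scoped ENNReal Real Topology

/-- The plane `ℝ²` with its Euclidean norm. -/
abbrev P2 : Type := EuclideanSpace ℝ (Fin 2)

/-- The vector `(a, b) ∈ ℝ²`. -/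
def vec2 (a b : ℝ) : P2 := (WithLp.equiv 2 (Fin 2 → ℝ)).symm ![a, b]

/-- The `j`-th of `N` equidistributed unit vectors:
`v_j = (cos(2πj/N), sin(2πj/N))`. -/
def dirN (N j : ℕ) : P2 :=
  vec2 (Real.cos (2 * Real.pi * j / N)) (Real.sin (2 * Real.pi * j / N))

/-- The principal value Hilbert transform of `f` along the direction `v` at `x`:
`p.v. ∫ f(x + tv) dt/t = lim_{ε→0⁺} ∫_{|t|>ε} f(x + tv) dt/t`. -/
def pvDir (f : P2 → ℝ) (v x : P2) : ℝ :=
  limUnder (𝓝[>] (0:ℝ)) (fun ε => ∫ t in {t : ℝ | ε < |t|}, f (x + t • v) / t)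

/-- The maximal directional Hilbert transform along `N` equidistributed directions. -/
def TstarEq (N : ℕ) (f : P2 → ℝ) (x : P2) : ℝ≥0∞ :=
  ⨆ j ∈ Finset.range N, ENNReal.ofReal |pvDir f (dirN N j) x|
/-!
The test function is `f_L = ∑_{k ≤ L} 2⁻ᵏ 1_{B(0, 2ᵏ)}`, comparable to `min(1, 1/|y|)` on
`B(0, 2ᴸ)`, so `‖f_L‖₂² ≲ L`. For `‖v‖ = 1`, `x + tv ∈ B(0, r)` exactly for `t` in the chord
`(-P - s, -P + s)`, where `P = ⟪x, v⟫`, `Q = ‖x‖² - P²` and `s = √(r² - Q)`; since `∫ dt/t` over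
a chord is explicit, the principal value along the line is `∑ₖ 2⁻ᵏ (log |sₖ - P| - log |sₖ + P|)`.
When `Q ≤ 1/4` and `P ≈ 2ᵐ`, all terms have the same sign and the `m + 1` terms with `2ᵏ ≤ 2ᵐ`
contribute `≳ 2⁻ᵐ` each. If `2ᵐ⁺⁴ ≤ N`, every `x` with `|x| ≈ 2ᵐ` sees such a line among the `N`
directions, so `T_N^* f_L ≳ (m + 1) 2⁻ᵐ` on an annulus of area `≳ 4ᵐ`. Summing over
`m ≤ L ≈ log N` gives `‖T_N^* f_L‖₂² ≳ L³`, hence `‖T_N^* f_L‖₂ ≳ L ‖f_L‖₂ ≈ log N ‖f_L‖₂`.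
For `N < 16`, where `log N` is bounded, the direction `(1, 0)` on a small ball near `(11/8, 0)`
suffices.
-/

section TruncatedInverse

theorem measurableSet_lt_abs (ε : ℝ) : MeasurableSet {u : ℝ | ε < |u|} :=
  measurableSet_lt measurable_const measurable_abs

theorem hasDerivAt_log_max_abs {ε t : ℝ} (hε : 0 < ε) (ht : |t| ≠ ε) :
    HasDerivAt (fun u => Real.log (max |u| ε))
      ({u : ℝ | ε < |u|}.indicator (fun u => u⁻¹) t) t := by
  rcases ht.lt_or_gt with ht | ht
  · rw [indicator_of_notMem (by simpa using ht.le)]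
    refine (hasDerivAt_const t (Real.log ε)).congr_of_eventuallyEq ?_
    filter_upwards [(isOpen_lt continuous_abs continuous_const).mem_nhds ht] with u hu
    rw [max_eq_right hu.le]
  · rw [indicator_of_mem (by exact ht)]
    have ht0 : t ≠ 0 := by rintro rfl; simp at ht; linarith
    refine (Real.hasDerivAt_log ht0).congr_of_eventuallyEq ?_
    filter_upwards [(isOpen_lt continuous_const continuous_abs).mem_nhds ht] with u hu
    rw [max_eq_left hu.le, Real.log_abs]

theorem integrableOn_indicator_abs_gt_inv {ε : ℝ} (hε : 0 < ε) {s : Set ℝ}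
    (hs : volume s ≠ ⊤) :
    IntegrableOn ({u : ℝ | ε < |u|}.indicator (fun u => u⁻¹)) s := by
  refine Measure.integrableOn_of_bounded (M := ε⁻¹) hs ?_ (ae_of_all _ fun t => ?_)
  · exact (measurable_inv.indicator (measurableSet_lt_abs ε)).aestronglyMeasurable
  · by_cases ht : ε < |t|
    · rw [indicator_of_mem (show t ∈ {u : ℝ | ε < |u|} from ht), norm_inv, Real.norm_eq_abs]
      exact inv_anti₀ hε ht.le
    · rw [indicator_of_notMem (show t ∉ {u : ℝ | ε < |u|} from ht), norm_zero]; positivity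

theorem intervalIntegral_indicator_abs_gt_inv {ε a b : ℝ} (hε : 0 < ε) (hab : a ≤ b)
    (ha : ε ≤ |a|) (hb : ε ≤ |b|) :
    ∫ t in a..b, {u : ℝ | ε < |u|}.indicator (fun u => u⁻¹) t = Real.log |b| - Real.log |a| := by
  have hG : Continuous fun u : ℝ => Real.log (max |u| ε) :=
    (continuous_abs.max continuous_const).log fun u => (hε.trans_le (le_max_right _ _)).ne'
  rw [integral_eq_of_hasDerivAt_off_countable_of_le _ _ hab ((countable_singleton ε).insert (-ε))
    hG.continuousOn (fun t ht => hasDerivAt_log_max_abs hε ?_)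
    ((intervalIntegrable_iff_integrableOn_Ioc_of_le hab).2
      (integrableOn_indicator_abs_gt_inv hε measure_Ioc_lt_top.ne)),
    max_eq_left hb, max_eq_left ha]
  intro habs
  apply ht.2
  rcases (abs_eq hε.le).1 habs with h | h <;> simp [h]

theorem indicator_one_div_eq_indicator_inv (s : Set ℝ) :
    (fun t => s.indicator 1 t / t) = s.indicator (fun u => u⁻¹) := by
  ext t; by_cases ht : t ∈ s <;> simp [ht]

theorem setIntegral_abs_gt_indicator_Ioo_div {ε a b : ℝ} (hε : 0 < ε) (hab : a ≤ b)
    (ha : ε ≤ |a|) (hb : ε ≤ |b|) :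
    ∫ t in {u : ℝ | ε < |u|}, (Ioo a b).indicator 1 t / t = Real.log |b| - Real.log |a| := by
  rw [indicator_one_div_eq_indicator_inv, setIntegral_indicator measurableSet_Ioo, inter_comm,
    ← setIntegral_indicator (measurableSet_lt_abs ε), ← integral_Ioc_eq_integral_Ioo,
    ← intervalIntegral.integral_of_le hab,
    intervalIntegral_indicator_abs_gt_inv hε hab ha hb]

theorem eventually_setIntegral_abs_gt_indicator_Ioo_div {a b : ℝ} (hab : a ≤ b) (ha : a ≠ 0)
    (hb : b ≠ 0) :
    ∀ᶠ ε in 𝓝[>] (0 : ℝ),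
      ∫ t in {u : ℝ | ε < |u|}, (Ioo a b).indicator 1 t / t = Real.log |b| - Real.log |a| := by
  filter_upwards [Ioo_mem_nhdsGT (lt_min (abs_pos.2 ha) (abs_pos.2 hb))] with ε hε
  exact setIntegral_abs_gt_indicator_Ioo_div hε.1 hab (hε.2.le.trans (min_le_left _ _))
    (hε.2.le.trans (min_le_right _ _))

theorem integrableOn_abs_gt_indicator_Ioo_div {ε : ℝ} (hε : 0 < ε) (a b : ℝ) :
    IntegrableOn (fun t => (Ioo a b).indicator 1 t / t) {u : ℝ | ε < |u|} := by
  rw [indicator_one_div_eq_indicator_inv, ← integrable_indicator_iff (measurableSet_lt_abs ε),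
    indicator_indicator, inter_comm, ← indicator_indicator,
    integrable_indicator_iff measurableSet_Ioo]
  exact integrableOn_indicator_abs_gt_inv hε measure_Ioo_lt_top.ne

end TruncatedInverse

section LineThroughBalls

variable {E : Type*} [NormedAddCommGroup E] [NormedSpace ℝ E]

theorem add_smul_mem_ball_zero_iff {x v : E} {P Q r : ℝ}
    (hline : ∀ t : ℝ, ‖x + t • v‖ ^ 2 = (t + P) ^ 2 + Q) (hr : 0 ≤ r) (t : ℝ) :
    x + t • v ∈ ball (0 : E) r ↔ t ∈ Ioo (-P - √(r ^ 2 - Q)) (-P + √(r ^ 2 - Q)) := by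
  rw [mem_ball_zero_iff, ← sq_lt_sq₀ (norm_nonneg _) hr, hline, ← lt_sub_iff_add_lt, ← sq_abs,
    ← Real.lt_sqrt (abs_nonneg _), abs_lt, mem_Ioo]
  constructor <;> rintro ⟨h₁, h₂⟩ <;> constructor <;> linarith

theorem tendsto_truncated_sum_indicator_ball {ι : Type*} (s : Finset ι) (c r : ι → ℝ)
    (hr : ∀ k ∈ s, 0 ≤ r k) {x v : E} {P Q : ℝ}
    (hline : ∀ t : ℝ, ‖x + t • v‖ ^ 2 = (t + P) ^ 2 + Q) (hP : ∀ k ∈ s, |P| ≠ √(r k ^ 2 - Q)) :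
    Tendsto (fun ε => ∫ t in {u : ℝ | ε < |u|},
        (∑ k ∈ s, c k * (ball (0 : E) (r k)).indicator 1 (x + t • v)) / t) (𝓝[>] 0)
      (𝓝 (∑ k ∈ s, c k *
        (Real.log |√(r k ^ 2 - Q) - P| - Real.log |√(r k ^ 2 - Q) + P|))) := by
  have hsum : ∀ t : ℝ, (∑ k ∈ s, c k * (ball (0 : E) (r k)).indicator 1 (x + t • v)) / t =
      ∑ k ∈ s, c k *
        ((Ioo (-P - √(r k ^ 2 - Q)) (-P + √(r k ^ 2 - Q))).indicator 1 t / t) := by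
    intro t
    rw [Finset.sum_div]
    refine Finset.sum_congr rfl fun k hk => ?_
    simp only [indicator, add_smul_mem_ball_zero_iff hline (hr k hk), mul_div_assoc, Pi.one_apply]
  have hends : ∀ k ∈ s, -P - √(r k ^ 2 - Q) ≠ 0 ∧ -P + √(r k ^ 2 - Q) ≠ 0 := by
    intro k hk
    have h := fun hPσ => hP k hk ((abs_eq (Real.sqrt_nonneg _)).2 hPσ)
    constructor <;> intro h0 <;> apply h <;> [right; left] <;> linarith
  refine tendsto_const_nhds.congr' ?_
  filter_upwards [self_mem_nhdsWithin, (eventually_all_finset s).2 fun k hk =>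
    eventually_setIntegral_abs_gt_indicator_Ioo_div
      (by linarith [Real.sqrt_nonneg (r k ^ 2 - Q)]) (hends k hk).1 (hends k hk).2]
    with ε hε hint
  simp_rw [hsum]
  rw [integral_finsetSum _ fun k _ =>
    (integrableOn_abs_gt_indicator_Ioo_div (mem_Ioi.1 hε) _ _).const_mul (c k)]
  refine Finset.sum_congr rfl fun k hk => ?_
  rw [integral_const_mul, hint k hk, ← abs_neg (-P - _)]
  ring_nf

theorem norm_add_smul_sq_of_norm_eq_one {F : Type*} [NormedAddCommGroup F] [InnerProductSpace ℝ F]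
    {v : F} (hv : ‖v‖ = 1) (x : F) (t : ℝ) :
    ‖x + t • v‖ ^ 2 = (t + inner ℝ x v) ^ 2 + (‖x‖ ^ 2 - inner ℝ x v ^ 2) := by
  rw [norm_add_sq_real, inner_smul_right, norm_smul, hv, Real.norm_eq_abs, mul_one, sq_abs]
  ring

end LineThroughBalls

section ChordLogarithms

theorem sqrt_sq_sub_mem_Icc {Q r : ℝ} (hQ : Q ∈ Icc (0 : ℝ) (1 / 4)) (hr : 1 ≤ r) :
    √(r ^ 2 - Q) ∈ Icc (4 / 5 * r) r := by
  constructor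
  · rw [Real.le_sqrt (by positivity) (by nlinarith [hQ.2])]
    nlinarith [hQ.2]
  · calc √(r ^ 2 - Q) ≤ √(r ^ 2) := Real.sqrt_le_sqrt (by linarith [hQ.1])
      _ = r := Real.sqrt_sq (by linarith)

theorem sqrt_two_pow_sq_sub_lt {k m : ℕ} {P Q : ℝ} (hQ : Q ∈ Icc (0 : ℝ) (1 / 4))
    (hP : P ∈ Icc (5 / 4 * 2 ^ m) (3 / 2 * 2 ^ m)) (hk : k ≤ m) :
    √((2 ^ k) ^ 2 - Q) < P := by
  have h2k : (2 : ℝ) ^ k ≤ 2 ^ m := pow_le_pow_right₀ one_le_two hk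
  have := (sqrt_sq_sub_mem_Icc hQ (one_le_pow₀ one_le_two : (1 : ℝ) ≤ 2 ^ k)).2
  linarith [hP.1, pow_pos (two_pos : (0 : ℝ) < 2) m]

theorem lt_sqrt_two_pow_sq_sub {k m : ℕ} {P Q : ℝ} (hQ : Q ∈ Icc (0 : ℝ) (1 / 4))
    (hP : P ∈ Icc (5 / 4 * 2 ^ m) (3 / 2 * 2 ^ m)) (hk : m < k) :
    P < √((2 ^ k) ^ 2 - Q) := by
  have h2k : (2 : ℝ) ^ (m + 1) ≤ 2 ^ k := pow_le_pow_right₀ one_le_two hk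
  have := (sqrt_sq_sub_mem_Icc hQ (one_le_pow₀ one_le_two : (1 : ℝ) ≤ 2 ^ k)).1
  rw [pow_succ] at h2k
  linarith [hP.2, pow_pos (two_pos : (0 : ℝ) < 2) m]

theorem two_mul_div_add_le_log_sub_log {s P : ℝ} (hs : 0 ≤ s) (hsP : s < P) :
    2 * s / (P + s) ≤ Real.log (P + s) - Real.log (P - s) := by
  have hPs : 0 < P + s := by linarith
  have h := Real.log_le_sub_one_of_pos (div_pos (by linarith : 0 < P - s) hPs)
  rw [Real.log_div (by linarith) hPs.ne', div_sub_one hPs.ne'] at h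
  have : (P - s - (P + s)) / (P + s) = -(2 * s / (P + s)) := by
    rw [← neg_div]
    ring
  linarith

theorem log_abs_sub_le_log_abs_add {s P : ℝ} (hs : 0 ≤ s) (hP : 0 < P) (hsP : s ≠ P) :
    Real.log |s - P| ≤ Real.log |s + P| :=
  Real.log_le_log (abs_pos.2 (sub_ne_zero.2 hsP)) (by
    rw [abs_of_pos (by linarith : 0 < s + P)]
    exact (abs_sub _ _).trans (by rw [abs_of_nonneg hs, abs_of_pos hP]))

theorem inv_two_pow_le_log_chord {k m : ℕ} {P Q : ℝ} (hQ : Q ∈ Icc (0 : ℝ) (1 / 4))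
    (hP : P ∈ Icc (5 / 4 * 2 ^ m) (3 / 2 * 2 ^ m)) (hk : k ≤ m) :
    1 / 2 ^ (m + 1) ≤ (2 : ℝ)⁻¹ ^ k *
      (Real.log |√((2 ^ k) ^ 2 - Q) + P| - Real.log |√((2 ^ k) ^ 2 - Q) - P|) := by
  have hσP := sqrt_two_pow_sq_sub_lt hQ hP hk
  obtain ⟨hσ₁, hσ₂⟩ := sqrt_sq_sub_mem_Icc hQ (one_le_pow₀ one_le_two : (1 : ℝ) ≤ 2 ^ k)
  set σ := √((2 ^ k) ^ 2 - Q)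
  obtain ⟨hP₁, hP₂⟩ := hP
  have h2k : (2 : ℝ) ^ k ≤ 2 ^ m := pow_le_pow_right₀ one_le_two hk
  have h2k₀ : (0 : ℝ) < 2 ^ k := by positivity
  have h2m : (0 : ℝ) < 2 ^ m := by positivity
  rw [abs_of_pos (by linarith : 0 < σ + P), abs_of_neg (by linarith : σ - P < 0), neg_sub,
    add_comm σ]
  calc 1 / 2 ^ (m + 1) ≤ (2 : ℝ)⁻¹ ^ k * (2 * σ / (P + σ)) := by
        rw [inv_pow, pow_succ, ← div_eq_inv_mul, div_div, div_le_div_iff₀ (by positivity)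
          (by nlinarith)]
        nlinarith
    _ ≤ _ := mul_le_mul_of_nonneg_left
        (two_mul_div_add_le_log_sub_log (by linarith) hσP) (by positivity)

theorem le_abs_sum_log_chord {L m : ℕ} (hm : m ≤ L) {P Q : ℝ} (hQ : Q ∈ Icc (0 : ℝ) (1 / 4))
    (hP : P ∈ Icc (5 / 4 * 2 ^ m) (3 / 2 * 2 ^ m)) :
    (m + 1) / 2 ^ (m + 1) ≤ |∑ k ∈ Finset.range (L + 1), (2 : ℝ)⁻¹ ^ k *
      (Real.log |√((2 ^ k) ^ 2 - Q) - P| - Real.log |√((2 ^ k) ^ 2 - Q) + P|)| := by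
  rw [← abs_neg, ← Finset.sum_neg_distrib]
  refine le_trans ?_ (le_abs_self _)
  simp only [← mul_neg, neg_sub]
  have hnonneg : ∀ k, 0 ≤ (2 : ℝ)⁻¹ ^ k *
      (Real.log |√((2 ^ k) ^ 2 - Q) + P| - Real.log |√((2 ^ k) ^ 2 - Q) - P|) := by
    intro k
    refine mul_nonneg (by positivity) (sub_nonneg.2 (log_abs_sub_le_log_abs_add
      (Real.sqrt_nonneg _) (by linarith [hP.1, pow_pos (two_pos : (0 : ℝ) < 2) m]) ?_))
    rcases le_or_gt k m with hk | hk
    · exact (sqrt_two_pow_sq_sub_lt hQ hP hk).ne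
    · exact (lt_sqrt_two_pow_sq_sub hQ hP hk).ne'
  calc ((m : ℝ) + 1) / 2 ^ (m + 1) = ∑ k ∈ Finset.range (m + 1), 1 / (2 : ℝ) ^ (m + 1) := by
        simp [div_eq_mul_inv]
    _ ≤ ∑ k ∈ Finset.range (m + 1), _ :=
        Finset.sum_le_sum fun k hk =>
          inv_two_pow_le_log_chord hQ hP (Nat.lt_succ_iff.1 (Finset.mem_range.1 hk))
    _ ≤ _ := Finset.sum_le_sum_of_subset_of_nonneg (Finset.range_subset_range.2 (by omega))
        fun k _ _ => hnonneg k

end ChordLogarithms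

section Directions

theorem norm_dirN (N j : ℕ) : ‖dirN N j‖ = 1 := by
  rw [EuclideanSpace.norm_eq, Fin.sum_univ_two]
  simp [dirN, vec2]

theorem ofReal_abs_pvDir_le_TstarEq {N j : ℕ} (hj : j < N) (f : P2 → ℝ) (x : P2) :
    ENNReal.ofReal |pvDir f (dirN N j) x| ≤ TstarEq N f x :=
  le_iSup₂ (f := fun j (_ : j ∈ Finset.range N) => ENNReal.ofReal |pvDir f (dirN N j) x|) j
    (Finset.mem_range.2 hj)

theorem exists_abs_sub_angle_le_pi_div {θ : ℝ} {N : ℕ} (hN : 0 < N) :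
    ∃ j < N, ∃ n : ℤ, |θ - (2 * π * j / N + n * (2 * π))| ≤ π / N := by
  set r := round (θ * N / (2 * π))
  have hN' : (0 : ℝ) < N := Nat.cast_pos.2 hN
  have hrem : 0 ≤ r % N := Int.emod_nonneg _ (by exact_mod_cast hN.ne')
  have hrem' : r % N < N := Int.emod_lt_of_pos _ (by exact_mod_cast hN)
  refine ⟨(r % N).toNat, by omega, r / N, ?_⟩
  have hr : 2 * π * ((r % N).toNat : ℕ) / N + (r / N : ℤ) * (2 * π) = 2 * π / N * r := by
    have hsplit : (r : ℝ) = ((r % N : ℤ) : ℝ) + N * ((r / N : ℤ) : ℝ) := by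
      exact_mod_cast (Int.emod_add_mul_ediv r N).symm
    have hj : (((r % N).toNat : ℕ) : ℝ) = ((r % N : ℤ) : ℝ) := by
      exact_mod_cast Int.toNat_of_nonneg hrem
    rw [hsplit, hj]
    field_simp
  rw [hr, show θ = 2 * π / N * (θ * N / (2 * π)) by field_simp, ← mul_sub, abs_mul,
    abs_of_pos (by positivity)]
  calc 2 * π / N * |θ * N / (2 * π) - r| ≤ 2 * π / N * (1 / 2) :=
        mul_le_mul_of_nonneg_left (abs_sub_round _) (by positivity)
    _ = π / N := by ring

theorem exists_polar (x : P2) : ∃ θ : ℝ, x 0 = ‖x‖ * Real.cos θ ∧ x 1 = ‖x‖ * Real.sin θ := by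
  set z := Complex.orthonormalBasisOneI.repr.symm x
  have hx : x = Complex.orthonormalBasisOneI.repr z :=
    (LinearIsometryEquiv.apply_symm_apply _ x).symm
  refine ⟨z.arg, ?_, ?_⟩ <;> rw [hx, LinearIsometryEquiv.norm_map]
  · simp [Complex.norm_mul_cos_arg]
  · simp [Complex.norm_mul_sin_arg]

theorem exists_dirN_inner_eq (x : P2) {N : ℕ} (hN : 0 < N) :
    ∃ j < N, ∃ δ : ℝ, |δ| ≤ π / N ∧ inner ℝ x (dirN N j) = ‖x‖ * Real.cos δ := by
  obtain ⟨θ, hx₀, hx₁⟩ := exists_polar x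
  obtain ⟨j, hj, n, hδ⟩ := exists_abs_sub_angle_le_pi_div (θ := θ) hN
  refine ⟨j, hj, _, hδ, ?_⟩
  rw [← sub_sub, Real.cos_sub_int_mul_two_pi, Real.cos_sub]
  simp [PiLp.inner_apply, Fin.sum_univ_two, dirN, vec2, hx₀, hx₁]
  ring

end Directions

section SquareRoots

theorem ENNReal.ofReal_le_rpow_one_half_iff {a : ℝ} (ha : 0 ≤ a) {I : ℝ≥0∞} :
    ENNReal.ofReal a ≤ I ^ (1 / 2 : ℝ) ↔ ENNReal.ofReal (a ^ 2) ≤ I := by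
  rw [one_div, ENNReal.le_rpow_inv_iff two_pos, ENNReal.ofReal_rpow_of_nonneg ha zero_le_two,
    Real.rpow_two]

theorem ENNReal.rpow_one_half_le_ofReal_iff {b : ℝ} (hb : 0 ≤ b) {I : ℝ≥0∞} :
    I ^ (1 / 2 : ℝ) ≤ ENNReal.ofReal b ↔ I ≤ ENNReal.ofReal (b ^ 2) := by
  rw [one_div, ENNReal.rpow_inv_le_iff two_pos, ENNReal.ofReal_rpow_of_nonneg hb zero_le_two,
    Real.rpow_two]

theorem eLpNorm_two_le_ofReal {α : Type*} [MeasurableSpace α] {μ : Measure α} {f : α → ℝ}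
    {b : ℝ} (hb : 0 ≤ b) (h : ∫⁻ x, ENNReal.ofReal (f x ^ 2) ∂μ ≤ ENNReal.ofReal (b ^ 2)) :
    eLpNorm f 2 μ ≤ ENNReal.ofReal b := by
  rw [eLpNorm_eq_lintegral_rpow_enorm_toReal two_ne_zero ENNReal.ofNat_ne_top,
    ENNReal.toReal_ofNat, ENNReal.rpow_one_half_le_ofReal_iff hb]
  refine le_trans (le_of_eq (lintegral_congr fun x => ?_)) h
  rw [Real.enorm_eq_ofReal_abs, ENNReal.ofReal_rpow_of_nonneg (abs_nonneg _) zero_le_two,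
    Real.rpow_two, sq_abs]

end SquareRoots

section MultiBall

def multiBall (L : ℕ) (y : P2) : ℝ :=
  ∑ k ∈ Finset.range (L + 1), (2 : ℝ)⁻¹ ^ k * (ball (0 : P2) (2 ^ k)).indicator 1 y

theorem pvDir_smul_multiBall (L : ℕ) (C : ℝ) {x v : P2} {P Q : ℝ}
    (hline : ∀ t : ℝ, ‖x + t • v‖ ^ 2 = (t + P) ^ 2 + Q)
    (hP : ∀ k ∈ Finset.range (L + 1), |P| ≠ √((2 ^ k) ^ 2 - Q)) :
    pvDir (C • multiBall L) v x = C * ∑ k ∈ Finset.range (L + 1), (2 : ℝ)⁻¹ ^ k *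
      (Real.log |√((2 ^ k) ^ 2 - Q) - P| - Real.log |√((2 ^ k) ^ 2 - Q) + P|) := by
  refine Tendsto.limUnder_eq ?_
  simp only [Pi.smul_apply, smul_eq_mul, mul_div_assoc, integral_const_mul]
  exact (tendsto_truncated_sum_indicator_ball _ _ _ (fun k _ => by positivity) hline hP).const_mul C

theorem le_TstarEq_smul_multiBall {N L m j : ℕ} (hj : j < N) (hm : m ≤ L) {C : ℝ} (hC : 0 ≤ C)
    {x : P2} (hP : inner ℝ x (dirN N j) ∈ Icc (5 / 4 * 2 ^ m) (3 / 2 * 2 ^ m))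
    (hQ : ‖x‖ ^ 2 - inner ℝ x (dirN N j) ^ 2 ∈ Icc (0 : ℝ) (1 / 4)) :
    ENNReal.ofReal (C * ((m + 1) / 2 ^ (m + 1))) ≤ TstarEq N (C • multiBall L) x := by
  have hP₀ : 0 < inner ℝ x (dirN N j) := by linarith [hP.1, pow_pos (two_pos : (0 : ℝ) < 2) m]
  have hσ : ∀ k ∈ Finset.range (L + 1),
      |inner ℝ x (dirN N j)| ≠ √((2 ^ k) ^ 2 - (‖x‖ ^ 2 - inner ℝ x (dirN N j) ^ 2)) := by
    intro k _
    rw [abs_of_pos hP₀]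
    rcases le_or_gt k m with hk | hk
    · exact (sqrt_two_pow_sq_sub_lt hQ hP hk).ne'
    · exact (lt_sqrt_two_pow_sq_sub hQ hP hk).ne
  refine le_trans (ENNReal.ofReal_le_ofReal ?_) (ofReal_abs_pvDir_le_TstarEq hj _ x)
  rw [pvDir_smul_multiBall L C (norm_add_smul_sq_of_norm_eq_one (norm_dirN N j) x) hσ, abs_mul,
    abs_of_nonneg hC]
  exact mul_le_mul_of_nonneg_left (le_abs_sum_log_chord hm hQ hP) hC


theorem multiBall_le_of_forall_notMem {L i : ℕ} {y : P2}
    (hy : ∀ j < i, y ∉ ball (0 : P2) (2 ^ j)) :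
    multiBall L y ≤ 2 * 2⁻¹ ^ i := by
  have hsummable : Summable fun k : ℕ => ite (i ≤ k) ((2 : ℝ)⁻¹ ^ k) 0 :=
    summable_geometric_two.of_nonneg_of_le (fun k => by positivity)
      fun k => by split_ifs <;> simp [one_div]
  rw [← tsum_geometric_inv_two_ge i]
  refine le_trans (Finset.sum_le_sum fun k _ => ?_)
    (hsummable.sum_le_tsum _ fun k _ => by positivity)
  split_ifs with hk
  · exact mul_le_of_le_one_right (by positivity) (indicator_le_self' (fun _ _ => zero_le_one) y
      |>.trans (by simp))
  · rw [indicator_of_notMem (hy k (not_le.1 hk)), mul_zero]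

theorem ofReal_multiBall_sq_le (L : ℕ) (y : P2) :
    ENNReal.ofReal (multiBall L y ^ 2) ≤ ∑ i ∈ Finset.range (L + 1),
      (ball (0 : P2) (2 ^ i)).indicator (fun _ => ENNReal.ofReal (4 * 4⁻¹ ^ i)) y := by
  classical
  by_cases hy : ∃ i, i ≤ L ∧ y ∈ ball (0 : P2) (2 ^ i)
  · -- `Nat.find hy` indexes the smallest of the balls containing `y`
    obtain ⟨hiL, hyi⟩ := Nat.find_spec hy
    have hle := multiBall_le_of_forall_notMem (L := L) fun j hj hyj =>
      Nat.find_min hy hj ⟨(hj.trans_le hiL).le, hyj⟩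
    refine le_trans ?_ (Finset.single_le_sum (fun _ _ => zero_le)
      (Finset.mem_range.2 (Nat.lt_succ_of_le hiL)))
    rw [indicator_of_mem hyi]
    refine ENNReal.ofReal_le_ofReal ?_
    have h0 : 0 ≤ multiBall L y := Finset.sum_nonneg fun k _ =>
      mul_nonneg (by positivity) (indicator_nonneg (fun _ _ => zero_le_one) y)
    calc multiBall L y ^ 2 ≤ (2 * 2⁻¹ ^ Nat.find hy) ^ 2 := pow_le_pow_left₀ h0 hle 2
      _ = 4 * 4⁻¹ ^ Nat.find hy := by rw [mul_pow, ← pow_mul, mul_comm _ 2, pow_mul]; norm_num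
  · push Not at hy
    have h0 : multiBall L y = 0 := Finset.sum_eq_zero fun k hk => by
      rw [indicator_of_notMem (hy k (Nat.lt_succ_iff.1 (Finset.mem_range.1 hk))), mul_zero]
    simp [h0]

theorem lintegral_ofReal_multiBall_sq_le (L : ℕ) :
    ∫⁻ y, ENNReal.ofReal (multiBall L y ^ 2) ≤ ENNReal.ofReal (16 * (L + 1)) := by
  have hball : ∀ i : ℕ, ENNReal.ofReal (4 * 4⁻¹ ^ i) * volume (ball (0 : P2) (2 ^ i)) ≤
      ENNReal.ofReal 16 := by
    intro i
    rw [EuclideanSpace.volume_ball_fin_two, ← ENNReal.ofReal_pow (by positivity),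
      ← ENNReal.ofReal_mul (by positivity), ← ENNReal.ofReal_mul (by positivity)]
    refine ENNReal.ofReal_le_ofReal (le_of_eq_of_le (b := 4 * π) ?_ (by linarith [Real.pi_le_four]))
    rw [← pow_mul, mul_comm _ 2, pow_mul, mul_assoc, ← mul_assoc (4⁻¹ ^ i), ← mul_pow]
    norm_num
  calc ∫⁻ y, ENNReal.ofReal (multiBall L y ^ 2)
      ≤ ∫⁻ y, ∑ i ∈ Finset.range (L + 1),
          (ball (0 : P2) (2 ^ i)).indicator (fun _ => ENNReal.ofReal (4 * 4⁻¹ ^ i)) y :=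
        lintegral_mono (ofReal_multiBall_sq_le L)
    _ = ∑ i ∈ Finset.range (L + 1),
          ENNReal.ofReal (4 * 4⁻¹ ^ i) * volume (ball (0 : P2) (2 ^ i)) := by
        rw [lintegral_finsetSum _ fun i _ => measurable_const.indicator measurableSet_ball]
        simp_rw [lintegral_indicator_const measurableSet_ball]
    _ ≤ ∑ _i ∈ Finset.range (L + 1), ENNReal.ofReal 16 := Finset.sum_le_sum fun i _ => hball i
    _ = ENNReal.ofReal (16 * (L + 1)) := by
        rw [Finset.sum_const, Finset.card_range, nsmul_eq_mul,
          ← ENNReal.ofReal_natCast, ← ENNReal.ofReal_mul (by positivity)]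
        push_cast
        ring_nf

theorem memLp_multiBall (L : ℕ) : MemLp (multiBall L) 2 volume :=
  memLp_finsetSum _ fun _ _ => (memLp_indicator_const 2 measurableSet_ball 1
    (Or.inr measure_ball_lt_top.ne)).const_mul _

theorem eLpNorm_smul_multiBall_le_one (L : ℕ) :
    eLpNorm ((√(16 * (L + 1)))⁻¹ • multiBall L) 2 volume ≤ 1 := by
  have hpos : 0 < √(16 * (L + 1)) := by positivity
  rw [eLpNorm_const_smul, Real.enorm_of_nonneg (by positivity)]
  calc ENNReal.ofReal (√(16 * (L + 1)))⁻¹ * eLpNorm (multiBall L) 2 volume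
      ≤ ENNReal.ofReal (√(16 * (L + 1)))⁻¹ * ENNReal.ofReal √(16 * (L + 1)) := by
        gcongr
        refine eLpNorm_two_le_ofReal hpos.le ?_
        rw [Real.sq_sqrt (by positivity)]
        exact lintegral_ofReal_multiBall_sq_le L
    _ = 1 := by
        rw [← ENNReal.ofReal_mul (by positivity), inv_mul_cancel₀ hpos.ne', ENNReal.ofReal_one]

end MultiBall

section Annuli

/-- The radii leave room for the projection of `x` onto a direction within `π / N` of it to stay
in the window `[5/4, 3/2] · 2ᵐ` of `le_TstarEq_smul_multiBall` once `2ᵐ⁺⁴ ≤ N`. -/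
def annulus (m : ℕ) : Set P2 := ball 0 (3 / 2 * 2 ^ m) \ ball 0 (4 / 3 * 2 ^ m)

theorem mem_annulus {m : ℕ} {x : P2} :
    x ∈ annulus m ↔ 4 / 3 * 2 ^ m ≤ ‖x‖ ∧ ‖x‖ < 3 / 2 * 2 ^ m := by
  simp [annulus, and_comm]

theorem measurableSet_annulus (m : ℕ) : MeasurableSet (annulus m) :=
  measurableSet_ball.diff measurableSet_ball

theorem ofReal_four_pow_le_volume_annulus (m : ℕ) :
    ENNReal.ofReal (4 ^ m) ≤ volume (annulus m) := by
  have h2m : (0 : ℝ) < 2 ^ m := by positivity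
  rw [annulus, measure_sdiff (ball_subset_ball (by linarith)) measurableSet_ball.nullMeasurableSet
      measure_ball_lt_top.ne, EuclideanSpace.volume_ball_fin_two,
    EuclideanSpace.volume_ball_fin_two, ← ENNReal.ofReal_pow (by positivity),
    ← ENNReal.ofReal_pow (by positivity), ← ENNReal.ofReal_mul (by positivity),
    ← ENNReal.ofReal_mul (by positivity), ← ENNReal.ofReal_sub _ (by positivity)]
  refine ENNReal.ofReal_le_ofReal ?_
  rw [mul_pow, mul_pow, ← pow_mul, mul_comm m 2, pow_mul]
  nlinarith [Real.pi_gt_three, pow_pos (by norm_num : (0 : ℝ) < 4) m]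

theorem pairwise_disjoint_annulus : Pairwise (Function.onFun Disjoint annulus) := by
  refine (pairwise_disjoint_on annulus).2 fun m n hmn => Set.disjoint_left.2 fun x hm hn => ?_
  rw [mem_annulus] at hm hn
  have : (2 : ℝ) ^ (m + 1) ≤ 2 ^ n := pow_le_pow_right₀ one_le_two hmn
  rw [pow_succ] at this
  linarith [hm.2, hn.1, pow_pos (two_pos : (0 : ℝ) < 2) m]

theorem exists_dirN_of_mem_annulus {N m : ℕ} (hN : 2 ^ (m + 4) ≤ N) {x : P2}
    (hx : x ∈ annulus m) :
    ∃ j < N, inner ℝ x (dirN N j) ∈ Icc (5 / 4 * 2 ^ m) (3 / 2 * 2 ^ m) ∧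
      ‖x‖ ^ 2 - inner ℝ x (dirN N j) ^ 2 ∈ Icc (0 : ℝ) (1 / 4) := by
  obtain ⟨j, hj, δ, hδ, hinner⟩ := exists_dirN_inner_eq x (lt_of_lt_of_le (by positivity) hN)
  refine ⟨j, hj, ?_⟩
  rw [hinner]
  obtain ⟨hR₁, hR₂⟩ := mem_annulus.1 hx
  set a : ℝ := 2 ^ m
  have ha : 1 ≤ a := one_le_pow₀ one_le_two
  have hNa : 16 * a ≤ N := by
    rw [show (16 : ℝ) * a = ((2 ^ (m + 4) : ℕ) : ℝ) by push_cast; ring]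
    exact_mod_cast hN
  have haδ : a * |δ| ≤ 1 / 4 := by
    calc a * |δ| ≤ a * (π / N) := mul_le_mul_of_nonneg_left hδ (by positivity)
      _ ≤ a * (4 / (16 * a)) := by
          gcongr
          exact Real.pi_le_four
      _ = 1 / 4 := by field_simp; norm_num
  have hδsq : δ ^ 2 ≤ 1 / 16 := by
    rw [← sq_abs]; nlinarith [abs_nonneg δ]
  have hcos : 31 / 32 ≤ Real.cos δ := by
    linarith [Real.one_sub_sq_div_two_le_cos (x := δ)]
  have hsin : Real.sin δ ^ 2 ≤ δ ^ 2 := by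
    rw [← sq_abs, ← sq_abs δ]
    exact pow_le_pow_left₀ (abs_nonneg _) Real.abs_sin_le_abs 2
  have hR₀ : 0 ≤ ‖x‖ := norm_nonneg x
  refine ⟨⟨by nlinarith, by nlinarith [Real.cos_le_one δ]⟩, ?_⟩
  rw [mul_pow, ← mul_one_sub, ← Real.sin_sq]
  refine ⟨by positivity, ?_⟩
  calc ‖x‖ ^ 2 * Real.sin δ ^ 2 ≤ (3 / 2 * a) ^ 2 * δ ^ 2 := by
        gcongr
    _ = 9 / 4 * (a * |δ|) ^ 2 := by rw [mul_pow a, sq_abs]; ring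
    _ ≤ 1 / 4 := by nlinarith [mul_nonneg (zero_le_one.trans ha) (abs_nonneg δ)]

end Annuli

section LowerBounds

theorem mul_measure_le_setLIntegral {α : Type*} [MeasurableSpace α] {μ : Measure α} {A : Set α}
    (hA : MeasurableSet A) {a : ℝ≥0∞} {g : α → ℝ≥0∞} (hg : ∀ x ∈ A, a ≤ g x) :
    a * μ A ≤ ∫⁻ x in A, g x ∂μ :=
  (setLIntegral_const A a).symm.le.trans (setLIntegral_mono' hA hg)

theorem sum_mul_measure_le_lintegral {α ι : Type*} [MeasurableSpace α] {μ : Measure α}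
    {s : Finset ι} {A : ι → Set α} (hd : (s : Set ι).PairwiseDisjoint A)
    (hA : ∀ i ∈ s, MeasurableSet (A i)) {a : ι → ℝ≥0∞} {g : α → ℝ≥0∞}
    (hg : ∀ i ∈ s, ∀ x ∈ A i, a i ≤ g x) :
    ∑ i ∈ s, a i * μ (A i) ≤ ∫⁻ x, g x ∂μ :=
  calc ∑ i ∈ s, a i * μ (A i) ≤ ∑ i ∈ s, ∫⁻ x in A i, g x ∂μ :=
        Finset.sum_le_sum fun i hi => mul_measure_le_setLIntegral (hA i hi) (hg i hi)
    _ = ∫⁻ x in ⋃ i ∈ s, A i, g x ∂μ := (lintegral_biUnion_finset hd hA g).symm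
    _ ≤ ∫⁻ x, g x ∂μ := setLIntegral_le_lintegral _ _

theorem cube_div_three_le_sum_range_sq (n : ℕ) :
    (n : ℝ) ^ 3 / 3 ≤ ∑ m ∈ Finset.range n, ((m : ℝ) + 1) ^ 2 := by
  induction n with
  | zero => simp
  | succ n ih =>
    rw [Finset.sum_range_succ]
    push_cast
    nlinarith [Nat.cast_nonneg (α := ℝ) n]

theorem ofReal_le_lintegral_TstarEq_sq_smul_multiBall_of_two_pow_le {N L : ℕ}
    (hN : 2 ^ (L + 4) ≤ N) {C : ℝ} (hC : 0 ≤ C) :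
    ENNReal.ofReal (C ^ 2 * (L + 1) ^ 3 / 12) ≤ ∫⁻ x, TstarEq N (C • multiBall L) x ^ 2 := by
  have hbound : ∀ m ∈ Finset.range (L + 1), ∀ x ∈ annulus m,
      ENNReal.ofReal (C * ((m + 1) / 2 ^ (m + 1))) ^ 2 ≤ TstarEq N (C • multiBall L) x ^ 2 := by
    intro m hm x hx
    have hmL : m ≤ L := Nat.lt_succ_iff.1 (Finset.mem_range.1 hm)
    obtain ⟨j, hj, hP, hQ⟩ := exists_dirN_of_mem_annulus
      ((Nat.pow_le_pow_right two_pos (by omega)).trans hN) hx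
    exact pow_le_pow_left' (le_TstarEq_smul_multiBall hj hmL hC hP hQ) 2
  have hterm : ∀ m : ℕ, ENNReal.ofReal (C * ((m + 1) / 2 ^ (m + 1))) ^ 2 * ENNReal.ofReal (4 ^ m) =
      ENNReal.ofReal (C ^ 2 / 4 * ((m : ℝ) + 1) ^ 2) := by
    intro m
    rw [← ENNReal.ofReal_pow (by positivity), ← ENNReal.ofReal_mul (by positivity)]
    congr 1
    rw [pow_succ, show (4 : ℝ) ^ m = (2 ^ m) ^ 2 by rw [← pow_mul, mul_comm, pow_mul]; norm_num]
    field_simp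
    ring
  calc ENNReal.ofReal (C ^ 2 * (L + 1) ^ 3 / 12)
      ≤ ∑ m ∈ Finset.range (L + 1),
          ENNReal.ofReal (C * ((m + 1) / 2 ^ (m + 1))) ^ 2 * ENNReal.ofReal (4 ^ m) := by
        simp_rw [hterm]
        rw [← ENNReal.ofReal_sum_of_nonneg fun m _ => by positivity, ← Finset.mul_sum]
        refine ENNReal.ofReal_le_ofReal ?_
        have := cube_div_three_le_sum_range_sq (L + 1)
        push_cast at this
        nlinarith [sq_nonneg C]
    _ ≤ ∑ m ∈ Finset.range (L + 1),
          ENNReal.ofReal (C * ((m + 1) / 2 ^ (m + 1))) ^ 2 * volume (annulus m) := by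
        gcongr with m
        exact ofReal_four_pow_le_volume_annulus m
    _ ≤ ∫⁻ x, TstarEq N (C • multiBall L) x ^ 2 :=
        sum_mul_measure_le_lintegral (pairwise_disjoint_annulus.set_pairwise _)
          (fun m _ => measurableSet_annulus m) hbound

theorem ofReal_le_lintegral_TstarEq_sq_smul_multiBall {N : ℕ} (hN : 0 < N) (L : ℕ) {C : ℝ}
    (hC : 0 ≤ C) :
    ENNReal.ofReal (3 / 256 * C ^ 2) ≤ ∫⁻ x, TstarEq N (C • multiBall L) x ^ 2 := by
  have hbound : ∀ x ∈ ball (vec2 (11 / 8) 0) (1 / 8),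
      ENNReal.ofReal (C / 2) ^ 2 ≤ TstarEq N (C • multiBall L) x ^ 2 := by
    intro x hx
    have h₀ : |x 0 - 11 / 8| < 1 / 8 := (PiLp.norm_apply_le (x - vec2 (11 / 8) 0) 0).trans_lt hx
    have h₁ : |x 1 - 0| < 1 / 8 := (PiLp.norm_apply_le (x - vec2 (11 / 8) 0) 1).trans_lt hx
    have hinner : inner ℝ x (dirN N 0) = x 0 := by
      simp [PiLp.inner_apply, Fin.sum_univ_two, dirN, vec2]
    have hnorm : ‖x‖ ^ 2 = x 0 ^ 2 + x 1 ^ 2 := by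
      simp [EuclideanSpace.norm_sq_eq, Fin.sum_univ_two]
    have hP : inner ℝ x (dirN N 0) ∈ Icc (5 / 4 * 2 ^ 0) (3 / 2 * 2 ^ 0) := by
      obtain ⟨h, h'⟩ := abs_lt.1 h₀
      rw [hinner]
      constructor <;> norm_num <;> linarith
    have hQ : ‖x‖ ^ 2 - inner ℝ x (dirN N 0) ^ 2 ∈ Icc (0 : ℝ) (1 / 4) := by
      obtain ⟨h, h'⟩ := abs_lt.1 h₁
      rw [hinner, hnorm, add_sub_cancel_left]
      constructor <;> nlinarith
    have h := le_TstarEq_smul_multiBall hN (Nat.zero_le L) hC hP hQ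
    rw [Nat.cast_zero, zero_add, zero_add, pow_one, mul_one_div] at h
    exact pow_le_pow_left' h 2
  calc ENNReal.ofReal (3 / 256 * C ^ 2)
      ≤ ENNReal.ofReal (C / 2) ^ 2 * volume (ball (vec2 (11 / 8) 0) (1 / 8)) := by
        rw [EuclideanSpace.volume_ball_fin_two, ← ENNReal.ofReal_pow (by positivity),
          ← ENNReal.ofReal_pow (by positivity), ← ENNReal.ofReal_mul (by positivity),
          ← ENNReal.ofReal_mul (by positivity)]
        refine ENNReal.ofReal_le_ofReal ?_
        nlinarith [Real.pi_gt_three, sq_nonneg C]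
    _ ≤ ∫⁻ x in ball (vec2 (11 / 8) 0) (1 / 8), TstarEq N (C • multiBall L) x ^ 2 :=
        mul_measure_le_setLIntegral measurableSet_ball hbound
    _ ≤ ∫⁻ x, TstarEq N (C • multiBall L) x ^ 2 := setLIntegral_le_lintegral _ _

theorem ofReal_sq_log_le_lintegral_TstarEq_sq_of_lt_sixteen {N : ℕ} (hN : 2 ≤ N) (h16 : N < 16) :
    ENNReal.ofReal ((1 / 200 * Real.log N) ^ 2) ≤
      ∫⁻ x, TstarEq N ((√(16 * (((0 : ℕ) : ℝ) + 1)))⁻¹ • multiBall 0) x ^ 2 := by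
  refine le_trans (ENNReal.ofReal_le_ofReal ?_)
    (ofReal_le_lintegral_TstarEq_sq_smul_multiBall (by omega) 0 (by positivity))
  have hlog₀ : 0 ≤ Real.log N := Real.log_nonneg (by exact_mod_cast (by omega : 1 ≤ N))
  have hlog : Real.log N ≤ 4 * Real.log 2 := by
    have h := Real.log_le_log (by positivity) (show (N : ℝ) ≤ 2 ^ 4 by exact_mod_cast h16.le)
    rwa [Real.log_pow, Nat.cast_ofNat] at h
  rw [inv_pow, Real.sq_sqrt (by positivity)]
  norm_num
  nlinarith [Real.log_two_lt_d9]

theorem ofReal_sq_log_le_lintegral_TstarEq_sq_of_lt_two_pow {N L : ℕ} (hL : 2 ^ (L + 4) ≤ N)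
    (hL' : N < 2 ^ (L + 5)) :
    ENNReal.ofReal ((1 / 200 * Real.log N) ^ 2) ≤
      ∫⁻ x, TstarEq N ((√(16 * ((L : ℝ) + 1)))⁻¹ • multiBall L) x ^ 2 := by
  refine le_trans (ENNReal.ofReal_le_ofReal ?_)
    (ofReal_le_lintegral_TstarEq_sq_smul_multiBall_of_two_pow_le hL (by positivity))
  have hN₀ : (0 : ℝ) < N := by exact_mod_cast (Nat.two_pow_pos _).trans_le hL
  have hlog₀ : 0 ≤ Real.log N := Real.log_nonneg (by exact_mod_cast hN₀)
  have hlog : Real.log N ≤ (L + 5) * Real.log 2 := by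
    have h := Real.log_le_log hN₀ (show (N : ℝ) ≤ 2 ^ (L + 5) by exact_mod_cast hL'.le)
    rwa [Real.log_pow, Nat.cast_add, Nat.cast_ofNat] at h
  have hlogL : Real.log N ≤ 4 * (L + 1) := by nlinarith [Real.log_two_lt_d9]
  rw [inv_pow, Real.sq_sqrt (by positivity),
    show (16 * ((L : ℝ) + 1))⁻¹ * (L + 1) ^ 3 / 12 = (L + 1) ^ 2 / 192 by field_simp; ring]
  nlinarith

end LowerBounds

/-- **Optimality (Proposition 3.5 of the paper).** For the `N` equidistributed unit
directions, the operator norm on `L²(ℝ²)` of the maximal directional Hilbert transform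
is at least `c log N` for an absolute constant `c > 0`: there is a function `f` with
`‖f‖₂ ≤ 1` and `‖T_N^* f‖₂ ≥ c log N`. -/
theorem maximal_directional_hilbert_lower_bound :
    ∃ c : ℝ, 0 < c ∧
      ∀ (N : ℕ), 2 ≤ N →
        ∃ f : P2 → ℝ, MemLp f 2 volume ∧ eLpNorm f 2 volume ≤ 1 ∧
          ENNReal.ofReal (c * Real.log N) ≤
            (∫⁻ x : P2, TstarEq N f x ^ 2 ∂volume) ^ (1/2 : ℝ) := by
  refine ⟨1 / 200, by norm_num, fun N hN => ?_⟩
  have hlog₀ : 0 ≤ 1 / 200 * Real.log N :=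
    mul_nonneg (by norm_num) (Real.log_nonneg (by exact_mod_cast (by omega : 1 ≤ N)))
  rcases lt_or_ge N 16 with h16 | h16
  · exact ⟨_, (memLp_multiBall 0).const_smul _, eLpNorm_smul_multiBall_le_one 0,
      (ENNReal.ofReal_le_rpow_one_half_iff hlog₀).2
        (ofReal_sq_log_le_lintegral_TstarEq_sq_of_lt_sixteen hN h16)⟩
  · have hlog2 : 4 ≤ Nat.log 2 N := Nat.le_log_of_pow_le one_lt_two h16
    obtain ⟨L, hL, hL'⟩ : ∃ L, 2 ^ (L + 4) ≤ N ∧ N < 2 ^ (L + 5) :=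
      ⟨Nat.log 2 N - 4, (Nat.pow_le_pow_right two_pos (by omega)).trans
        (Nat.pow_log_le_self 2 (by omega)), (Nat.lt_pow_succ_log_self one_lt_two N).trans_le
          (Nat.pow_le_pow_right two_pos (by omega))⟩
    exact ⟨_, (memLp_multiBall L).const_smul _, eLpNorm_smul_multiBall_le_one L,
      (ENNReal.ofReal_le_rpow_one_half_iff hlog₀).2
        (ofReal_sq_log_le_lintegral_TstarEq_sq_of_lt_two_pow hL hL')⟩
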